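/- Let k ≥ 2, a : Fin k → ℝ, m : ℝ, and let ω : Fin k → ℝ be a weight vector. If the generalized operator annihilates the second weighted isobaric polynomial, i.e. T_{a,m}(P_{2,ω}) = 0 where P_{2,ω} = ω₁·t₁² + ω₂·t₂, then m·ω₂ = 2·ω₁. -/

import Mathlib

open MvPolynomial Finset

/-- The weight coefficient `A_ω(α)` of Theorem 2.1 (for `α ≠ 0`):
`A_ω(α) = multinomial(α) · (Σ α_i ω_i) / (Σ α_i)`. -/
noncomputable def Aw {k : ℕ} (ω : Fin k → ℝ) (α : Fin k → ℕ) : ℝ :=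
  (Nat.multinomial Finset.univ α : ℝ) * (∑ i, (α i : ℝ) * ω i) / (∑ i, (α i : ℝ))

/-- The isobaric degree `Σ_{i=1}^k i·α_i` of an exponent vector. -/
def isoDeg {k : ℕ} (α : Fin k → ℕ) : ℕ := ∑ i, (i.1 + 1) * α i

/-- The (finite) set of exponent vectors of isobaric degree `n`. -/
def wipIndex (k n : ℕ) : Finset (Fin k → ℕ) :=
  (Fintype.piFinset fun _ : Fin k => Finset.range (n + 1)).filter fun α => isoDeg α = n

/-- The weighted isobaric polynomial `P_{n,ω} = Σ_α A_ω(α)·t^α`. -/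
noncomputable def WIP (k n : ℕ) (ω : Fin k → ℝ) : MvPolynomial (Fin k) ℝ :=
  ∑ α ∈ wipIndex k n, MvPolynomial.monomial (Finsupp.equivFunOnFinite.symm α) (Aw ω α)

/-- The operator `T_m(P) = D₁₁P − Σ_j t_j D_{2j}P − m·D₂P`. -/
noncomputable def Tm (k : ℕ) (hk : 2 ≤ k) (m : ℝ) (P : MvPolynomial (Fin k) ℝ) :
    MvPolynomial (Fin k) ℝ :=
  pderiv (⟨0, by omega⟩ : Fin k) (pderiv (⟨0, by omega⟩ : Fin k) P)
    - ∑ j : Fin k, X j * pderiv (⟨1, by omega⟩ : Fin k) (pderiv j P)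
    - C m * pderiv (⟨1, by omega⟩ : Fin k) P

/-- The `j`-th element `γ^{(j)}` of the string generated by `γ`. -/
def strElem (k : ℕ) (hk : 2 ≤ k) (γ : Fin k → ℕ) (j : ℕ) : Fin k → ℕ :=
  fun i => if i = (⟨0, by omega⟩ : Fin k) then γ i + 2 * j
    else if i = (⟨1, by omega⟩ : Fin k) then γ i - j else γ i

/-- The `ω`-weighted string generated by `γ`:
`S_ω(γ) = Σ_{j=0}^{γ₂} A_ω(γ^{(j)})·t^{γ^{(j)}}`. -/
noncomputable def strPoly (k : ℕ) (hk : 2 ≤ k) (ω : Fin k → ℝ) (γ : Fin k → ℕ) :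
    MvPolynomial (Fin k) ℝ :=
  ∑ j ∈ Finset.range (γ (⟨1, by omega⟩ : Fin k) + 1),
    MvPolynomial.monomial (Finsupp.equivFunOnFinite.symm (strElem k hk γ j))
      (Aw ω (strElem k hk γ j))

/-- The generalized operator `T_{a,m}(P) = D₁₁P − Σ_j a_j t_j D_{2j}P − m·D₂P`. -/
noncomputable def Tam (k : ℕ) (hk : 2 ≤ k) (a : Fin k → ℝ) (m : ℝ)
    (P : MvPolynomial (Fin k) ℝ) : MvPolynomial (Fin k) ℝ :=
  pderiv (⟨0, by omega⟩ : Fin k) (pderiv (⟨0, by omega⟩ : Fin k) P)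
    - ∑ j : Fin k, C (a j) * X j * pderiv (⟨1, by omega⟩ : Fin k) (pderiv j P)
    - C m * pderiv (⟨1, by omega⟩ : Fin k) P

/-! Compare constant terms. Every summand `a_j t_j ∂₂∂_j P` has zero constant term, so the constant
term of `T_{a,m}(P)` is `2·[t₁²]P − m·[t₂]P`; for `P = P_{2,ω}` these coefficients are
`A_ω(2e₁) = ω₁` and `A_ω(e₂) = ω₂`. -/

section Coefficients

variable {k : ℕ}

lemma Aw_single (ω : Fin k → ℝ) (i : Fin k) {v : ℕ} (hv : v ≠ 0) :
    Aw ω (Pi.single i v) = ω i := by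
  have hv' : (v : ℝ) ≠ 0 := Nat.cast_ne_zero.mpr hv
  rw [Aw, Nat.multinomial_single]
  simp only [Pi.single_apply, Nat.cast_ite, Nat.cast_zero, ite_mul, zero_mul,
    Finset.sum_ite_eq', Finset.mem_univ, if_true, Nat.cast_one, one_mul]
  field_simp

lemma isoDeg_single (i : Fin k) (v : ℕ) : isoDeg (Pi.single i v) = (i.1 + 1) * v := by
  simp [isoDeg, Pi.single_apply]

lemma single_mem_wipIndex {n : ℕ} (i : Fin k) {v : ℕ} (h : (i.1 + 1) * v = n) :
    Pi.single i v ∈ wipIndex k n := by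
  refine Finset.mem_filter.mpr ⟨Fintype.mem_piFinset.mpr fun j => ?_, isoDeg_single i v ▸ h⟩
  rw [Finset.mem_range, Pi.single_apply]
  split_ifs <;> nlinarith

lemma coeff_WIP (n : ℕ) (ω : Fin k → ℝ) (α : Fin k → ℕ) :
    coeff (Finsupp.equivFunOnFinite.symm α) (WIP k n ω) =
      if α ∈ wipIndex k n then Aw ω α else 0 := by
  simp [WIP, coeff_sum, coeff_monomial]

lemma coeff_single_WIP {n : ℕ} (ω : Fin k → ℝ) (i : Fin k) {v : ℕ} (hv : v ≠ 0)
    (h : (i.1 + 1) * v = n) : coeff (Finsupp.single i v) (WIP k n ω) = ω i := by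
  rw [← Finsupp.equivFunOnFinite_symm_single, coeff_WIP, if_pos (single_mem_wipIndex i h),
    Aw_single ω i hv]

end Coefficients

section ConstantCoeff

variable {σ R : Type*} [CommRing R]

lemma constantCoeff_pderiv (i : σ) (p : MvPolynomial σ R) :
    constantCoeff (pderiv i p) = coeff (Finsupp.single i 1) p := by
  rw [constantCoeff_eq, coeff_pderiv]
  simp

lemma constantCoeff_pderiv_pderiv (i : σ) (p : MvPolynomial σ R) :
    constantCoeff (pderiv i (pderiv i p)) = 2 * coeff (Finsupp.single i 2) p := by
  rw [constantCoeff_pderiv, coeff_pderiv, ← Finsupp.single_add]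
  simp [mul_comm, one_add_one_eq_two]

end ConstantCoeff

lemma constantCoeff_Tam (k : ℕ) (hk : 2 ≤ k) (a : Fin k → ℝ) (m : ℝ)
    (P : MvPolynomial (Fin k) ℝ) :
    constantCoeff (Tam k hk a m P) =
      2 * coeff (Finsupp.single ⟨0, by omega⟩ 2) P
        - m * coeff (Finsupp.single ⟨1, by omega⟩ 1) P := by
  rw [Tam, map_sub, map_sub, constantCoeff_pderiv_pderiv]
  simp [constantCoeff_pderiv]

/-- Lemma 4.7: if the generalized operator annihilates `P_{2,ω} = ω₁t₁² + ω₂t₂`,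
then `m·ω₂ = 2·ω₁`. -/
theorem second_term_condition (k : ℕ) (hk : 2 ≤ k) (a : Fin k → ℝ) (m : ℝ)
    (ω : Fin k → ℝ) (h : Tam k hk a m (WIP k 2 ω) = 0) :
    m * ω (⟨1, by omega⟩ : Fin k) = 2 * ω (⟨0, by omega⟩ : Fin k) := by
  have h0 := congrArg constantCoeff h
  rw [constantCoeff_Tam, coeff_single_WIP (n := 2) ω _ two_ne_zero rfl,
    coeff_single_WIP (n := 2) ω _ one_ne_zero rfl, map_zero] at h0
  linarith
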